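/- Let N and D be finite sets, let ρ : N → ℤ satisfy ρ(n)² = 1 for all n, let w : D → ℤ and i : D → ℤ, and let ℓ₊, ℓ₋ : D → N and J : N → ℤ satisfy J(ℓ₊(d)) = 2·i(d) + 1 and J(ℓ₋(d)) = 2·i(d) − 1 for every d ∈ D. Define α : N → ℤ by α(n) = ρ(n)·( Σ_{d : ℓ₊(d)=n} w(d) + Σ_{d : ℓ₋(d)=n} w(d) ). Then the Laurent polynomial Σ_{n∈N} α(n)·ρ(n)·t^{J(n)} ∈ ℤ[t, t⁻¹] is divisible by (t + t⁻¹), and the quotient equals Σ_{d∈D} w(d)·t^{2·i(d)}, i.e. the quotient is the image of the Laurent polynomial Σ_{d∈D} w(d)·q^{i(d)} ∈ ℤ[q, q⁻¹] under the ring homomorphism sending q to t². -/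

import Mathlib

/-!
Since `ρ n ^ 2 = 1`, the coefficient `α n * ρ n` is the total weight of the double points lifting to
the circle `n`, so regrouping the sum over circles by double points gives
`Σ_d w d · (t^(2 i d + 1) + t^(2 i d - 1)) = (t + t⁻¹) · Σ_d w d · t^(2 i d)`.
-/

open LaurentPolynomial Finset

lemma LaurentPolynomial.mapDomainRingHom_C_mul_T {R : Type*} [CommSemiring R] (f : ℤ →+ ℤ)
    (r : R) (m : ℤ) :
    AddMonoidAlgebra.mapDomainRingHom R f (C r * T m) = C r * T (f m) := by
  rw [← single_eq_C_mul_T, ← single_eq_C_mul_T]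
  exact AddMonoidAlgebra.mapDomain_single

lemma LaurentPolynomial.T_add_one_add_T_sub_one {R : Type*} [Semiring R] (k : ℤ) :
    T (k + 1) + T (k - 1) = (T 1 + T (-1) : R[T;T⁻¹]) * T k := by
  rw [add_mul, ← T_add, ← T_add, add_comm (1 : ℤ), add_comm (-1 : ℤ), sub_eq_add_neg]

lemma LaurentPolynomial.sum_fiberwise_C_mul_T {N D R : Type*} [Fintype N] [Fintype D]
    [DecidableEq N] [Semiring R] (ℓ : D → N) (w : D → R) (J : N → ℤ) :
    ∑ n : N, C (∑ d ∈ univ.filter fun d => ℓ d = n, w d) * T (J n) =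
      ∑ d : D, C (w d) * T (J (ℓ d)) := by
  rw [← sum_fiberwise univ ℓ fun d => C (w d) * T (J (ℓ d))]
  refine sum_congr rfl fun n _ => ?_
  rw [map_sum, sum_mul]
  exact sum_congr rfl fun d hd => by rw [(mem_filter.mp hd).2]

/-- The quantized Arnold strangeness is a genuine Laurent polynomial in `q`:
the sum `Σ_n α n · ρ n · t^(J n)` is divisible by `t + t⁻¹` in `ℤ[t, t⁻¹]`,
and the quotient is the image of `Σ_d w d · q^(i d) ∈ ℤ[q, q⁻¹]` under the
ring homomorphism sending `q` to `t²` (i.e. doubling exponents). -/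
theorem sum_alpha_rho_T_div
    (N D : Type*) [Fintype N] [Fintype D] [DecidableEq N]
    (ρ : N → ℤ) (hρ : ∀ n, ρ n ^ 2 = 1)
    (w : D → ℤ) (i : D → ℤ)
    (ℓp ℓm : D → N) (J : N → ℤ)
    (hJp : ∀ d, J (ℓp d) = 2 * i d + 1)
    (hJm : ∀ d, J (ℓm d) = 2 * i d - 1)
    (α : N → ℤ)
    (hα : ∀ n, α n = ρ n *
      ((∑ d ∈ Finset.univ.filter fun d => ℓp d = n, w d) +
       (∑ d ∈ Finset.univ.filter fun d => ℓm d = n, w d)))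
    -- the ring homomorphism `ℤ[q, q⁻¹] → ℤ[t, t⁻¹]`, `q ↦ t²`
    (φ : LaurentPolynomial ℤ →+* LaurentPolynomial ℤ)
    (hφ : φ = AddMonoidAlgebra.mapDomainRingHom ℤ
      ({ toFun := fun n : ℤ => 2 * n,
         map_zero' := by simp,
         map_add' := by intro a b; ring } : ℤ →+ ℤ)) :
    (T 1 + T (-1)) ∣ (∑ n : N, C (α n * ρ n) * T (J n)) ∧
      ∑ n : N, C (α n * ρ n) * T (J n) =
        (T 1 + T (-1)) * φ (∑ d : D, C (w d) * T (i d)) := by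
  have hαρ : ∀ n, α n * ρ n =
      (∑ d ∈ univ.filter fun d => ℓp d = n, w d) + ∑ d ∈ univ.filter fun d => ℓm d = n, w d := by
    intro n
    linear_combination (∑ d ∈ univ.filter fun d => ℓp d = n, w d) * hρ n +
      (∑ d ∈ univ.filter fun d => ℓm d = n, w d) * hρ n + ρ n * hα n
  have key : ∑ n : N, C (α n * ρ n) * T (J n) = (T 1 + T (-1)) * φ (∑ d : D, C (w d) * T (i d)) :=
    calc ∑ n : N, C (α n * ρ n) * T (J n)
        = ∑ d : D, C (w d) * T (J (ℓp d)) + ∑ d : D, C (w d) * T (J (ℓm d)) := by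
          simp only [hαρ, map_add, add_mul, sum_add_distrib, sum_fiberwise_C_mul_T]
      _ = ∑ d : D, C (w d) * ((T 1 + T (-1)) * T (2 * i d)) := by
          simp only [← sum_add_distrib, ← mul_add, hJp, hJm, T_add_one_add_T_sub_one]
      _ = (T 1 + T (-1)) * φ (∑ d : D, C (w d) * T (i d)) := by
          simp only [hφ, map_sum, mapDomainRingHom_C_mul_T, mul_sum, AddMonoidHom.coe_mk,
            ZeroHom.coe_mk, mul_left_comm]
  exact ⟨⟨_, key⟩, key⟩
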